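/- Suppose Σ ∈ P(X) is a weakly compatible irreducible collection of partial splits of X. Then any two split closures of Σ obtained using solely the Y-rule θ_Y (with (P) the property of being weakly compatible) are equal. -/

import Mathlib

/-!
Common definitions: partial splits of a finite set `X`, modelled as unordered
pairs (`Sym2`) of nonempty disjoint subsets of `X`; the `M`-, `Y`- and `Z`-
closure rules; weak compatibility; `X`-cycles and display; split closure
sequences and split closures.
-/

variable {X : Type*}

/-- `S` is a partial split of `X`: an unordered pair of nonempty disjoint subsets of `X`. -/
def IsPartialSplit (S : Sym2 (Set X)) : Prop :=
  ∃ A B : Set X, S = s(A, B) ∧ A.Nonempty ∧ B.Nonempty ∧ Disjoint A B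

/-- `S` is a full split of `X`: a partial split whose two parts cover `X`. -/
def IsFullSplit (S : Sym2 (Set X)) : Prop :=
  ∃ A B : Set X, S = s(A, B) ∧ A.Nonempty ∧ B.Nonempty ∧ Disjoint A B ∧ A ∪ B = Set.univ

/-- The partial split `S` extends the partial split `T`. -/
def SplitExtends (S T : Sym2 (Set X)) : Prop :=
  ∃ A B C D : Set X, S = s(A, B) ∧ T = s(C, D) ∧ C ⊆ A ∧ D ⊆ B

/-- `Sig ⪯ Sig'`: every partial split of `Sig` is extended by one of `Sig'`. -/
def Preceq (Sig Sig' : Set (Sym2 (Set X))) : Prop :=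
  ∀ S ∈ Sig, ∃ T ∈ Sig', SplitExtends T S

/-- `Sig⁻`: the set obtained from `Sig` by removing all redundant partial splits,
i.e. those extended by a different element of `Sig`. -/
def sreduce (Sig : Set (Sym2 (Set X))) : Set (Sym2 (Set X)) :=
  {S | S ∈ Sig ∧ ¬ ∃ T ∈ Sig, T ≠ S ∧ SplitExtends T S}

/-- `Sig ∈ P(X)`: `Sig` is an irreducible collection of partial splits of `X`. -/
def InPX (Sig : Set (Sym2 (Set X))) : Prop :=
  (∀ S ∈ Sig, IsPartialSplit S) ∧ sreduce Sig = Sig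

/-- Two partial splits are compatible if some part of one is disjoint from some part
of the other. -/
def SplitCompatible (S T : Sym2 (Set X)) : Prop :=
  ∃ A B C D : Set X, S = s(A, B) ∧ T = s(C, D) ∧ A ∩ C = ∅

/-- Weak compatibility of a (multi)triple of partial splits: for every choice of parts,
one of the four distinguished triple intersections is empty. -/
def WeaklyCompatTriple (S1 S2 S3 : Sym2 (Set X)) : Prop :=
  ∀ A1 B1 A2 B2 A3 B3 : Set X,
    S1 = s(A1, B1) → S2 = s(A2, B2) → S3 = s(A3, B3) →
    A1 ∩ A2 ∩ A3 = ∅ ∨ B1 ∩ B2 ∩ A3 = ∅ ∨ B1 ∩ A2 ∩ B3 = ∅ ∨ A1 ∩ B2 ∩ B3 = ∅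

/-- A collection of partial splits is weakly compatible if every three of its members are. -/
def WeaklyCompatible (Sig : Set (Sym2 (Set X))) : Prop :=
  ∀ S1 ∈ Sig, ∀ S2 ∈ Sig, ∀ S3 ∈ Sig, WeaklyCompatTriple S1 S2 S3

/-- Condition of the `M`-rule for the parts `A1|B1`, `A2|B2`. -/
def mCond (A1 B1 A2 B2 : Set X) : Prop :=
  (A1 ∩ A2).Nonempty ∧ (B1 ∩ B2).Nonempty

/-- Output of the `M`-rule applied with respect to the parts `A1|B1`, `A2|B2`. -/
def mOut (A1 B1 A2 B2 : Set X) : Set (Sym2 (Set X)) :=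
  {s(A1, B1), s(A2, B2), s(A1 ∩ A2, B1 ∪ B2), s(B1 ∩ B2, A1 ∪ A2)}

/-- Condition of the `Y`-rule for the parts `A1|B1`, `A2|B2`, `A3|B3`. -/
def yCond (A1 B1 A2 B2 A3 B3 : Set X) : Prop :=
  (A1 ∩ A2 ∩ A3).Nonempty ∧ (B1 ∩ B2 ∩ A3).Nonempty ∧
    (B1 ∩ A2 ∩ B3).Nonempty ∧ A1 ∩ B2 ∩ B3 = ∅

/-- Output of the `Y`-rule applied with respect to the parts `A1|B1`, `A2|B2`, `A3|B3`. -/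
def yOut (A1 B1 A2 B2 A3 B3 : Set X) : Set (Sym2 (Set X)) :=
  {s(B1 ∪ (B2 ∩ B3), A1), s(A2 ∪ (A1 ∩ B3), B2), s(A3 ∪ (A1 ∩ B2), B3)}

/-- Condition of the `Z`-rule for the parts `A1|B1`, `A2|B2`. -/
def zCond (A1 B1 A2 B2 : Set X) : Prop :=
  (A1 ∩ A2).Nonempty ∧ (A2 ∩ B1).Nonempty ∧ (B1 ∩ B2).Nonempty ∧ A1 ∩ B2 = ∅

/-- Output of the `Z`-rule applied with respect to the parts `A1|B1`, `A2|B2`. -/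
def zOut (A1 B1 A2 B2 : Set X) : Set (Sym2 (Set X)) :=
  {s(B1 ∪ B2, A1), s(B2, A1 ∪ A2)}

/-- `Sig'` is obtained from `Sig` by a single application of the `Y`-rule. -/
def yStep (Sig Sig' : Set (Sym2 (Set X))) : Prop :=
  ∃ A1 B1 A2 B2 A3 B3 : Set X,
    s(A1, B1) ∈ Sig ∧ s(A2, B2) ∈ Sig ∧ s(A3, B3) ∈ Sig ∧
    s(A1, B1) ≠ s(A2, B2) ∧ s(A1, B1) ≠ s(A3, B3) ∧ s(A2, B2) ≠ s(A3, B3) ∧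
    yCond A1 B1 A2 B2 A3 B3 ∧
    Sig' = sreduce (Sig ∪ yOut A1 B1 A2 B2 A3 B3)

/-- `Sig'` is obtained from `Sig` by a single application of the `M`-rule. -/
def mStep (Sig Sig' : Set (Sym2 (Set X))) : Prop :=
  ∃ A1 B1 A2 B2 : Set X,
    s(A1, B1) ∈ Sig ∧ s(A2, B2) ∈ Sig ∧ s(A1, B1) ≠ s(A2, B2) ∧
    mCond A1 B1 A2 B2 ∧
    Sig' = sreduce (Sig ∪ mOut A1 B1 A2 B2)

/-- `Sig'` is obtained from `Sig` by a single non-trivial application of the `Y`-rule. -/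
def yStepNT (Sig Sig' : Set (Sym2 (Set X))) : Prop :=
  ∃ A1 B1 A2 B2 A3 B3 : Set X,
    s(A1, B1) ∈ Sig ∧ s(A2, B2) ∈ Sig ∧ s(A3, B3) ∈ Sig ∧
    s(A1, B1) ≠ s(A2, B2) ∧ s(A1, B1) ≠ s(A3, B3) ∧ s(A2, B2) ≠ s(A3, B3) ∧
    yCond A1 B1 A2 B2 A3 B3 ∧
    ¬ Preceq (sreduce (yOut A1 B1 A2 B2 A3 B3)) Sig ∧
    Sig' = sreduce (Sig ∪ yOut A1 B1 A2 B2 A3 B3)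

/-- `Sig'` is obtained from `Sig` by a single non-trivial application of the `M`-rule. -/
def mStepNT (Sig Sig' : Set (Sym2 (Set X))) : Prop :=
  ∃ A1 B1 A2 B2 : Set X,
    s(A1, B1) ∈ Sig ∧ s(A2, B2) ∈ Sig ∧ s(A1, B1) ≠ s(A2, B2) ∧
    mCond A1 B1 A2 B2 ∧
    ¬ Preceq (sreduce (mOut A1 B1 A2 B2)) Sig ∧
    Sig' = sreduce (Sig ∪ mOut A1 B1 A2 B2)

/-- `Sig` is closed under the `Y`-rule: every application of the `Y`-rule to `Sig` is trivial. -/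
def yClosed (Sig : Set (Sym2 (Set X))) : Prop :=
  ∀ A1 B1 A2 B2 A3 B3 : Set X,
    s(A1, B1) ∈ Sig → s(A2, B2) ∈ Sig → s(A3, B3) ∈ Sig →
    s(A1, B1) ≠ s(A2, B2) → s(A1, B1) ≠ s(A3, B3) → s(A2, B2) ≠ s(A3, B3) →
    yCond A1 B1 A2 B2 A3 B3 →
    Preceq (sreduce (yOut A1 B1 A2 B2 A3 B3)) Sig

/-- `Sig` is closed under the `M`-rule: every application of the `M`-rule to `Sig` is trivial. -/
def mClosed (Sig : Set (Sym2 (Set X))) : Prop :=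
  ∀ A1 B1 A2 B2 : Set X,
    s(A1, B1) ∈ Sig → s(A2, B2) ∈ Sig → s(A1, B1) ≠ s(A2, B2) →
    mCond A1 B1 A2 B2 →
    Preceq (sreduce (mOut A1 B1 A2 B2)) Sig

/-- A split closure sequence for `Sig` of length `n` with respect to the property `P` and
the non-trivial single-application relation `stepNT`: a strictly `⪯`-increasing sequence
in `P(X)` starting at `Sig` in which every term satisfying `P` is followed by the result
of one non-trivial application of the rule. -/
def IsClosureSeq (P : Set (Sym2 (Set X)) → Prop)
    (stepNT : Set (Sym2 (Set X)) → Set (Sym2 (Set X)) → Prop)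
    (Sig : Set (Sym2 (Set X))) (n : ℕ) (f : ℕ → Set (Sym2 (Set X))) : Prop :=
  f 0 = Sig ∧ (∀ i ≤ n, InPX (f i)) ∧
    (∀ i < n, P (f i) ∧ stepNT (f i) (f (i + 1)) ∧
      Preceq (f i) (f (i + 1)) ∧ f i ≠ f (i + 1))

/-- `cl` is a split closure of `Sig` (with `cl = none` playing the role of `ω`):
the last element of a split closure sequence for `Sig`, which either satisfies `P` and is
closed under the rule, or fails `P`, in which case it is replaced by `ω`. -/
def IsSplitClosure (P : Set (Sym2 (Set X)) → Prop)
    (stepNT : Set (Sym2 (Set X)) → Set (Sym2 (Set X)) → Prop)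
    (closed : Set (Sym2 (Set X)) → Prop)
    (Sig : Set (Sym2 (Set X))) (cl : Option (Set (Sym2 (Set X)))) : Prop :=
  ∃ (n : ℕ) (f : ℕ → Set (Sym2 (Set X))),
    IsClosureSeq P stepNT Sig n f ∧
    ((P (f n) ∧ closed (f n) ∧ cl = some (f n)) ∨ (¬ P (f n) ∧ cl = none))

/-- Split closure with respect to the `Y`-rule, `(P)` being weak compatibility. -/
def IsYClosure (Sig : Set (Sym2 (Set X))) (cl : Option (Set (Sym2 (Set X)))) : Prop :=
  IsSplitClosure WeaklyCompatible yStepNT yClosed Sig cl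

/-- Split closure with respect to the `M`-rule, `(P)` holding for all collections. -/
def IsMClosure (Sig : Set (Sym2 (Set X))) (cl : Option (Set (Sym2 (Set X)))) : Prop :=
  IsSplitClosure (fun _ => True) mStepNT mClosed Sig cl

/-- Split closure with respect to the combined `M/Y`-rule, `(P)` being weak compatibility. -/
def IsMYClosure (Sig : Set (Sym2 (Set X))) (cl : Option (Set (Sym2 (Set X)))) : Prop :=
  IsSplitClosure WeaklyCompatible
    (fun s s' => mStepNT s s' ∨ yStepNT s s') (fun s => mClosed s ∧ yClosed s) Sig cl

/-- `C` is an `X`-cycle: a connected graph on the vertex set `X` (`|X| ≥ 3`) in which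
every vertex has degree `2`. -/
def IsXCycle (C : SimpleGraph X) : Prop :=
  C.Connected ∧ 3 ≤ Nat.card X ∧ ∀ v : X, (C.neighborSet v).ncard = 2

/-- The partial split `S` is displayed by the `X`-cycle `C`: there are two distinct
edges of `C` whose deletion leaves one component containing one part of `S` and
another component containing the other part. -/
def DisplaysSplit (C : SimpleGraph X) (S : Sym2 (Set X)) : Prop :=
  ∃ A B : Set X, S = s(A, B) ∧
    ∃ e1 e2 : Sym2 X, e1 ∈ C.edgeSet ∧ e2 ∈ C.edgeSet ∧ e1 ≠ e2 ∧
      ∃ c1 c2 : (C.deleteEdges {e1, e2}).ConnectedComponent,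
        c1 ≠ c2 ∧ A ⊆ c1.supp ∧ B ⊆ c2.supp

/-- A collection of partial splits is displayed by `C` if each of its members is. -/
def DisplaysColl (C : SimpleGraph X) (Sig : Set (Sym2 (Set X))) : Prop :=
  ∀ S ∈ Sig, DisplaysSplit C S

/-- `cl ≠ ω` and the underlying collection is displayed by `C`. -/
def OptionDisplays (C : SimpleGraph X) (cl : Option (Set (Sym2 (Set X)))) : Prop :=
  ∃ Sig, cl = some Sig ∧ DisplaysColl C Sig

/-- The ground set `A ∪ B` of a partial split `A|B`. -/
def splitGround (S : Sym2 (Set X)) : Set X :=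
  ⋃₀ {A : Set X | A ∈ S}

/-- Membership in `P_ω(X) = P(X) ∪ {ω}`. -/
def InPOmega (x : Option (Set (Sym2 (Set X)))) : Prop :=
  x = none ∨ ∃ Sig, x = some Sig ∧ InPX Sig

/-- The order `⪯` on `P_ω(X)`, with `Sig ⪯ ω` for all `Sig` and `ω ⪯ ω`. -/
def PreceqO (x y : Option (Set (Sym2 (Set X)))) : Prop :=
  y = none ∨ ∃ Sig Sig', x = some Sig ∧ y = some Sig' ∧ Preceq Sig Sig'

/-- Split closure as a relation on `P_ω(X)`, with `⟨ω⟩ = ω`. -/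
def ClosO (cls : Set (Sym2 (Set X)) → Option (Set (Sym2 (Set X))) → Prop)
    (x y : Option (Set (Sym2 (Set X)))) : Prop :=
  (x = none ∧ y = none) ∨ ∃ Sig, x = some Sig ∧ cls Sig y

/-!
A weakly compatible, `Y`-closed `G ∈ P(X)` lying above `Σ` lies above every term of a `Y`-rule
split closure sequence for `Σ`: if the three input splits of a `Y`-step are extended by members
of `G`, those members again satisfy the condition of the `Y`-rule (weak compatibility of `G`
supplies the empty intersection), their outputs extend the outputs of the step, and `G`
dominates them because it is closed. Two closures that are collections therefore lie below each
other, and `⪯` is antisymmetric on `P(X)`. A closure cannot be `ω` while the other is not,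
since weak compatibility passes down along `⪯`.
-/

open Set

section SplitExtends

lemma splitExtends_refl (S : Sym2 (Set X)) : SplitExtends S S := by
  induction S using Sym2.ind with
  | _ A B => exact ⟨A, B, A, B, rfl, rfl, subset_rfl, subset_rfl⟩

lemma exists_mk_of_splitExtends_mk {T : Sym2 (Set X)} {A B : Set X}
    (h : SplitExtends T s(A, B)) : ∃ A' B', T = s(A', B') ∧ A ⊆ A' ∧ B ⊆ B' := by
  obtain ⟨P, Q, C, D, rfl, hCD, hC, hD⟩ := h
  rcases Sym2.eq_iff.1 hCD with ⟨rfl, rfl⟩ | ⟨rfl, rfl⟩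
  · exact ⟨P, Q, rfl, hC, hD⟩
  · exact ⟨Q, P, Sym2.eq_swap, hD, hC⟩

lemma SplitExtends.trans {S T U : Sym2 (Set X)} (hST : SplitExtends S T)
    (hTU : SplitExtends T U) : SplitExtends S U := by
  induction U using Sym2.ind with
  | _ E F =>
  obtain ⟨C, D, rfl, hEC, hFD⟩ := exists_mk_of_splitExtends_mk hTU
  obtain ⟨A, B, rfl, hCA, hDB⟩ := exists_mk_of_splitExtends_mk hST
  exact ⟨A, B, E, F, rfl, rfl, hEC.trans hCA, hFD.trans hDB⟩

noncomputable def splitSize (S : Sym2 (Set X)) : ℕ :=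
  Sym2.lift ⟨fun A B => A.ncard + B.ncard, fun _ _ => Nat.add_comm _ _⟩ S

lemma splitSize_le_of_splitExtends [Finite X] {S T : Sym2 (Set X)} (h : SplitExtends S T) :
    splitSize T ≤ splitSize S := by
  obtain ⟨A, B, C, D, rfl, rfl, hC, hD⟩ := h
  exact Nat.add_le_add (ncard_le_ncard hC) (ncard_le_ncard hD)

lemma SplitExtends.eq_of_splitSize_le [Finite X] {S T : Sym2 (Set X)} (h : SplitExtends S T)
    (hle : splitSize S ≤ splitSize T) : S = T := by
  obtain ⟨A, B, C, D, rfl, rfl, hC, hD⟩ := h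
  have hCA := ncard_le_ncard hC
  have hDB := ncard_le_ncard hD
  change A.ncard + B.ncard ≤ C.ncard + D.ncard at hle
  rw [eq_of_subset_of_ncard_le hC (by omega), eq_of_subset_of_ncard_le hD (by omega)]

lemma splitExtends_antisymm [Finite X] {S T : Sym2 (Set X)} (hST : SplitExtends S T)
    (hTS : SplitExtends T S) : S = T :=
  hST.eq_of_splitSize_le (splitSize_le_of_splitExtends hTS)

lemma disjoint_of_isPartialSplit_mk {A B : Set X} (h : IsPartialSplit s(A, B)) :
    Disjoint A B := by
  obtain ⟨P, Q, hPQ, -, -, hd⟩ := h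
  rcases Sym2.eq_iff.1 hPQ with ⟨rfl, rfl⟩ | ⟨rfl, rfl⟩
  exacts [hd, hd.symm]

lemma mk_ne_mk_of_inter_nonempty {A B C D : Set X} (hAB : Disjoint A B)
    (hAC : (A ∩ C).Nonempty) (hBC : (B ∩ C).Nonempty) : s(A, B) ≠ s(C, D) := by
  intro h
  rcases Sym2.eq_iff.1 h with ⟨rfl, -⟩ | ⟨-, rfl⟩
  · exact not_disjoint_iff_nonempty_inter.2 hBC hAB.symm
  · exact not_disjoint_iff_nonempty_inter.2 hAC hAB

end SplitExtends

section Preceq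

lemma preceq_refl (Sig : Set (Sym2 (Set X))) : Preceq Sig Sig :=
  fun S hS => ⟨S, hS, splitExtends_refl S⟩

lemma Preceq.trans {Sig Sig' Sig'' : Set (Sym2 (Set X))} (h : Preceq Sig Sig')
    (h' : Preceq Sig' Sig'') : Preceq Sig Sig'' := by
  intro S hS
  obtain ⟨T, hT, hTS⟩ := h S hS
  obtain ⟨U, hU, hUT⟩ := h' T hT
  exact ⟨U, hU, hUT.trans hTS⟩

lemma Preceq.union {Sig Sig' Sig'' : Set (Sym2 (Set X))} (h : Preceq Sig Sig'')
    (h' : Preceq Sig' Sig'') : Preceq (Sig ∪ Sig') Sig'' := by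
  rintro S (hS | hS)
  exacts [h S hS, h' S hS]

lemma preceq_sreduce [Finite X] (Sig : Set (Sym2 (Set X))) : Preceq Sig (sreduce Sig) := by
  intro S hS
  obtain ⟨T, ⟨hT, hTS⟩, hmax⟩ :=
    (toFinite {T ∈ Sig | SplitExtends T S}).exists_maximalFor splitSize _
      ⟨S, hS, splitExtends_refl S⟩
  refine ⟨T, ⟨hT, ?_⟩, hTS⟩
  rintro ⟨U, hU, hUT, hUext⟩
  exact hUT (hUext.eq_of_splitSize_le
    (hmax ⟨hU, hUext.trans hTS⟩ (splitSize_le_of_splitExtends hUext)))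

lemma preceq_antisymm [Finite X] {F G : Set (Sym2 (Set X))} (hF : sreduce F = F)
    (hG : sreduce G = G) (hFG : Preceq F G) (hGF : Preceq G F) : F = G := by
  suffices key : ∀ {F G : Set (Sym2 (Set X))}, sreduce F = F → Preceq F G → Preceq G F →
      F ⊆ G from (key hF hFG hGF).antisymm (key hG hGF hFG)
  intro F G hF hFG hGF S hS
  obtain ⟨T, hT, hTS⟩ := hFG S hS
  obtain ⟨S', hS', hS'T⟩ := hGF T hT
  have hS'S : S' = S := by
    by_contra hne
    exact (show S ∈ sreduce F from hF.symm ▸ hS).2 ⟨S', hS', hne, hS'T.trans hTS⟩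
  subst hS'S
  exact splitExtends_antisymm hS'T hTS ▸ hT

lemma WeaklyCompatible.of_preceq {Sig Sig' : Set (Sym2 (Set X))} (hwc : WeaklyCompatible Sig')
    (h : Preceq Sig Sig') : WeaklyCompatible Sig := by
  rintro _ h1 _ h2 _ h3 A1 B1 A2 B2 A3 B3 rfl rfl rfl
  obtain ⟨T1, hT1, hE1⟩ := h _ h1
  obtain ⟨T2, hT2, hE2⟩ := h _ h2
  obtain ⟨T3, hT3, hE3⟩ := h _ h3
  obtain ⟨A1', B1', rfl, hA1, hB1⟩ := exists_mk_of_splitExtends_mk hE1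
  obtain ⟨A2', B2', rfl, hA2, hB2⟩ := exists_mk_of_splitExtends_mk hE2
  obtain ⟨A3', B3', rfl, hA3, hB3⟩ := exists_mk_of_splitExtends_mk hE3
  refine (hwc _ hT1 _ hT2 _ hT3 _ _ _ _ _ _ rfl rfl rfl).imp ?_ (Or.imp ?_ (Or.imp ?_ ?_)) <;>
    exact fun h => subset_empty_iff.1 (h ▸ inter_subset_inter (inter_subset_inter ‹_› ‹_›) ‹_›)

end Preceq

section YRule

lemma yCond_of_subset {A1 B1 A2 B2 A3 B3 A1' B1' A2' B2' A3' B3' : Set X}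
    (hwc : WeaklyCompatTriple s(A1', B1') s(A2', B2') s(A3', B3'))
    (hA1 : A1 ⊆ A1') (hB1 : B1 ⊆ B1') (hA2 : A2 ⊆ A2') (hB2 : B2 ⊆ B2')
    (hA3 : A3 ⊆ A3') (hB3 : B3 ⊆ B3') (hy : yCond A1 B1 A2 B2 A3 B3) :
    yCond A1' B1' A2' B2' A3' B3' := by
  obtain ⟨hAAA, hBBA, hBAB, -⟩ := hy
  have hAAA' := hAAA.mono (inter_subset_inter (inter_subset_inter hA1 hA2) hA3)
  have hBBA' := hBBA.mono (inter_subset_inter (inter_subset_inter hB1 hB2) hA3)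
  have hBAB' := hBAB.mono (inter_subset_inter (inter_subset_inter hB1 hA2) hB3)
  refine ⟨hAAA', hBBA', hBAB', ?_⟩
  rcases hwc _ _ _ _ _ _ rfl rfl rfl with h | h | h | h
  exacts [(hAAA'.ne_empty h).elim, (hBBA'.ne_empty h).elim, (hBAB'.ne_empty h).elim, h]

lemma yOut_preceq_yOut {A1 B1 A2 B2 A3 B3 A1' B1' A2' B2' A3' B3' : Set X}
    (hA1 : A1 ⊆ A1') (hB1 : B1 ⊆ B1') (hA2 : A2 ⊆ A2') (hB2 : B2 ⊆ B2')
    (hA3 : A3 ⊆ A3') (hB3 : B3 ⊆ B3') :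
    Preceq (yOut A1 B1 A2 B2 A3 B3) (yOut A1' B1' A2' B2' A3' B3') := by
  intro S hS
  simp only [yOut, mem_insert_iff, mem_singleton_iff] at hS ⊢
  rcases hS with rfl | rfl | rfl
  · exact ⟨_, Or.inl rfl, _, _, _, _, rfl, rfl,
      union_subset_union hB1 (inter_subset_inter hB2 hB3), hA1⟩
  · exact ⟨_, Or.inr (Or.inl rfl), _, _, _, _, rfl, rfl,
      union_subset_union hA2 (inter_subset_inter hA1 hB3), hB2⟩
  · exact ⟨_, Or.inr (Or.inr rfl), _, _, _, _, rfl, rfl,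
      union_subset_union hA3 (inter_subset_inter hA1 hB2), hB3⟩

lemma yOut_preceq_of_yClosed [Finite X] {G : Set (Sym2 (Set X))}
    (hG : ∀ S ∈ G, IsPartialSplit S) (hwc : WeaklyCompatible G) (hcl : yClosed G)
    {A1 B1 A2 B2 A3 B3 : Set X} {T1 T2 T3 : Sym2 (Set X)}
    (hT1 : T1 ∈ G) (hT2 : T2 ∈ G) (hT3 : T3 ∈ G) (hE1 : SplitExtends T1 s(A1, B1))
    (hE2 : SplitExtends T2 s(A2, B2)) (hE3 : SplitExtends T3 s(A3, B3))
    (hy : yCond A1 B1 A2 B2 A3 B3) :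
    Preceq (yOut A1 B1 A2 B2 A3 B3) G := by
  obtain ⟨A1', B1', rfl, hA1, hB1⟩ := exists_mk_of_splitExtends_mk hE1
  obtain ⟨A2', B2', rfl, hA2, hB2⟩ := exists_mk_of_splitExtends_mk hE2
  obtain ⟨A3', B3', rfl, hA3, hB3⟩ := exists_mk_of_splitExtends_mk hE3
  have hy' := yCond_of_subset (hwc _ hT1 _ hT2 _ hT3) hA1 hB1 hA2 hB2 hA3 hB3 hy
  have ⟨hAAA, hBBA, hBAB, _⟩ := hy'
  have hd1 := disjoint_of_isPartialSplit_mk (hG _ hT1)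
  have hd2 := disjoint_of_isPartialSplit_mk (hG _ hT2)
  have h12 : s(A1', B1') ≠ s(A2', B2') := mk_ne_mk_of_inter_nonempty hd1
    (hAAA.mono fun _ hx => hx.1) (hBAB.mono fun _ hx => hx.1)
  have h13 : s(A1', B1') ≠ s(A3', B3') := mk_ne_mk_of_inter_nonempty hd1
    (hAAA.mono fun _ hx => ⟨hx.1.1, hx.2⟩) (hBBA.mono fun _ hx => ⟨hx.1.1, hx.2⟩)
  have h23 : s(A2', B2') ≠ s(A3', B3') := mk_ne_mk_of_inter_nonempty hd2
    (hAAA.mono fun _ hx => ⟨hx.1.2, hx.2⟩) (hBBA.mono fun _ hx => ⟨hx.1.2, hx.2⟩)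
  exact (yOut_preceq_yOut hA1 hB1 hA2 hB2 hA3 hB3).trans
    ((preceq_sreduce _).trans (hcl _ _ _ _ _ _ hT1 hT2 hT3 h12 h13 h23 hy'))

lemma yStepNT.yStep {Sig Sig' : Set (Sym2 (Set X))} (h : yStepNT Sig Sig') : yStep Sig Sig' :=
  let ⟨A1, B1, A2, B2, A3, B3, h1, h2, h3, h12, h13, h23, hy, _, hSig'⟩ := h
  ⟨A1, B1, A2, B2, A3, B3, h1, h2, h3, h12, h13, h23, hy, hSig'⟩

lemma yStep.preceq_of_yClosed [Finite X] {G Sig Sig' : Set (Sym2 (Set X))}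
    (hstep : yStep Sig Sig') (hG : ∀ S ∈ G, IsPartialSplit S) (hwc : WeaklyCompatible G)
    (hcl : yClosed G) (hSig : Preceq Sig G) : Preceq Sig' G := by
  obtain ⟨A1, B1, A2, B2, A3, B3, h1, h2, h3, -, -, -, hy, rfl⟩ := hstep
  obtain ⟨T1, hT1, hE1⟩ := hSig _ h1
  obtain ⟨T2, hT2, hE2⟩ := hSig _ h2
  obtain ⟨T3, hT3, hE3⟩ := hSig _ h3
  exact fun S hS => (hSig.union
    (yOut_preceq_of_yClosed hG hwc hcl hT1 hT2 hT3 hE1 hE2 hE3 hy)) S hS.1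

end YRule

section ClosureSeq

variable {P : Set (Sym2 (Set X)) → Prop} {Sig : Set (Sym2 (Set X))} {n : ℕ}
  {f : ℕ → Set (Sym2 (Set X))}

lemma IsClosureSeq.preceq_of_le {stepNT : Set (Sym2 (Set X)) → Set (Sym2 (Set X)) → Prop}
    (hf : IsClosureSeq P stepNT Sig n f) : ∀ i ≤ n, Preceq Sig (f i)
  | 0, _ => hf.1 ▸ preceq_refl _
  | i + 1, hi => (hf.preceq_of_le i (by omega)).trans (hf.2.2 i hi).2.2.1

lemma IsClosureSeq.preceq_of_yClosed [Finite X] {G : Set (Sym2 (Set X))}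
    (hf : IsClosureSeq P yStepNT Sig n f) (hG : ∀ S ∈ G, IsPartialSplit S)
    (hwc : WeaklyCompatible G) (hcl : yClosed G) (hSig : Preceq Sig G) :
    ∀ i ≤ n, Preceq (f i) G
  | 0, _ => hf.1 ▸ hSig
  | i + 1, hi => (hf.2.2 i hi).2.1.yStep.preceq_of_yClosed hG hwc hcl
      (hf.preceq_of_yClosed hG hwc hcl hSig i (by omega))

end ClosureSeq

theorem statement11_general {X : Type*} [Fintype X] (Sig : Set (Sym2 (Set X)))
    (cl1 cl2 : Option (Set (Sym2 (Set X))))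
    (h1 : IsYClosure Sig cl1) (h2 : IsYClosure Sig cl2) :
    cl1 = cl2 := by
  obtain ⟨n, f, hf, hfn⟩ := h1
  obtain ⟨m, g, hg, hgm⟩ := h2
  have hfg (hwc : WeaklyCompatible (g m)) (hcl : yClosed (g m)) : Preceq (f n) (g m) :=
    hf.preceq_of_yClosed (hg.2.1 m le_rfl).1 hwc hcl (hg.preceq_of_le m le_rfl) n le_rfl
  have hgf (hwc : WeaklyCompatible (f n)) (hcl : yClosed (f n)) : Preceq (g m) (f n) :=
    hg.preceq_of_yClosed (hf.2.1 n le_rfl).1 hwc hcl (hf.preceq_of_le n le_rfl) m le_rfl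
  rcases hfn with ⟨hPf, hclf, rfl⟩ | ⟨hPf, rfl⟩ <;> rcases hgm with ⟨hPg, hclg, rfl⟩ | ⟨hPg, rfl⟩
  · exact congrArg some (preceq_antisymm (hf.2.1 n le_rfl).2 (hg.2.1 m le_rfl).2
      (hfg hPg hclg) (hgf hPf hclf))
  · exact (hPg (hPf.of_preceq (hgf hPf hclf))).elim
  · exact (hPf (hPg.of_preceq (hfg hPg hclg))).elim
  · rfl

/-- for a weakly compatible `Σ ∈ P(X)`, any two split closures of `Σ`
obtained solely via the `Y`-rule (with `(P)` being weak compatibility) are equal. -/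
theorem statement11 {X : Type*} [Fintype X] (Sig : Set (Sym2 (Set X)))
    (hPX : InPX Sig) (hwc : WeaklyCompatible Sig)
    (cl1 cl2 : Option (Set (Sym2 (Set X))))
    (h1 : IsYClosure Sig cl1) (h2 : IsYClosure Sig cl2) :
    cl1 = cl2 :=
  statement11_general Sig cl1 cl2 h1 h2
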